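/- arXiv:2106.01774 — 4 statements merged into one kernel-verified Lean document; each statement's English description precedes it below -/
import Mathlib

section
/- Let n ≥ 1 and let R(P_n) = u_1, …, u_q be the rooted list of the path P_n. Then (1) the set {u_1, …, u_q} equals the minimal monomial generating set G(J(P_n)) of the cover ideal J(P_n), and (2) J(P_n) has linear quotients with respect to the order u_1, …, u_q, i.e., for every i = 2, …, q the colon ideal (u_1, …, u_{i−1}) : (u_i) is generated by a subset of the variables. -/
open MvPolynomial

noncomputable section

/-- The cover ideal of the path graph `P_n` on vertices `x_1, …, x_n`:
the intersection of the ideals `(x_i, x_{i+1})` over the edges of the path. -/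
def pathCoverIdeal (k : Type*) [Field k] (n : ℕ) : Ideal (MvPolynomial ℕ k) :=
  ⨅ i ∈ Finset.Icc 1 (n - 1), Ideal.span {(X i : MvPolynomial ℕ k), X (i + 1)}

/-- A monomial with coefficient `1`. -/
def IsMonomial {k : Type*} [Field k] (m : MvPolynomial ℕ k) : Prop :=
  ∃ a : ℕ →₀ ℕ, m = monomial a 1

/-- The minimal monomial generating set `G(I)` of a monomial ideal `I`:
monomials of `I` that are not strictly divisible by another monomial of `I`. -/
def minGens {k : Type*} [Field k] (I : Ideal (MvPolynomial ℕ k)) :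
    Set (MvPolynomial ℕ k) :=
  {m | IsMonomial m ∧ m ∈ I ∧ ∀ m', IsMonomial m' → m' ∈ I → m' ∣ m → m' = m}

/-- The rooted list `R(P_n)` of the path `P_n`. -/
def rootedList (k : Type*) [Field k] : ℕ → List (MvPolynomial ℕ k)
  | 0 => [1]
  | 1 => [1]
  | 2 => [X 1, X 2]
  | 3 => [X 2, X 1 * X 3]
  | (n + 4) =>
      ((rootedList k (n + 2)).map fun u => X (n + 3) * u) ++
      ((rootedList k (n + 1)).map fun u => X (n + 4) * X (n + 2) * u)

/-- `F(I^s)`: the set of `s`-fold products of minimal generators of `I`. -/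
def sFold {k : Type*} [Field k] (I : Ideal (MvPolynomial ℕ k)) (s : ℕ) :
    Set (MvPolynomial ℕ k) :=
  {m | ∃ L : List (MvPolynomial ℕ k), L.length = s ∧ (∀ u ∈ L, u ∈ minGens I) ∧ m = L.prod}

/-- `a >_lex b`: the first entry where `a` and `b` differ is bigger in `a`. -/
def lexGt (a b : ℕ → ℕ) : Prop :=
  ∃ t, (∀ j, j < t → a j = b j) ∧ b t < a t

/-- `a` is an exponent-vector expression of `M` as an `s`-fold product of the terms of
the list `L`. -/
def IsExprOn {k : Type*} [Field k] (L : List (MvPolynomial ℕ k)) (s : ℕ) (a : ℕ → ℕ)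
    (M : MvPolynomial ℕ k) : Prop :=
  (∀ i, L.length ≤ i → a i = 0) ∧ (∑ i ∈ Finset.range L.length, a i) = s ∧
    M = ∏ i ∈ Finset.range L.length, (L.getD i 1) ^ (a i)

/-- `a` is the (lexicographically) maximal expression of `M` as an `s`-fold product of
the terms of the list `L`. -/
def IsMaxExpr {k : Type*} [Field k] (L : List (MvPolynomial ℕ k)) (s : ℕ) (a : ℕ → ℕ)
    (M : MvPolynomial ℕ k) : Prop :=
  IsExprOn L s a M ∧ ∀ b, IsExprOn L s b M → b ≠ a → lexGt a b

/-- The rooted order `M >_R N` on `s`-fold products, relative to the list `L` of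
minimal generators: maximal expressions are compared lexicographically. -/
def rootedGt {k : Type*} [Field k] (L : List (MvPolynomial ℕ k)) (s : ℕ)
    (M N : MvPolynomial ℕ k) : Prop :=
  ∃ a b, IsMaxExpr L s a M ∧ IsMaxExpr L s b N ∧ lexGt a b

/-- An ideal is generated by a subset of the variables. -/
def genByVars {k : Type*} [Field k] (I : Ideal (MvPolynomial ℕ k)) : Prop :=
  ∃ T : Set ℕ, I = Ideal.span ((fun i => (X i : MvPolynomial ℕ k)) '' T)

end

/-!
A minimal vertex cover of `P_(n+2)` either avoids `x_(n+2)`, and then it is `x_(n+1)` together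
with a minimal cover of `P_n`, or it contains `x_(n+2)`, and then it avoids `x_(n+1)`. Applied
twice, this is the recursion defining `R(P_n)`, so the terms of `R(P_n)` are the squarefree
monomials `x_C` of the minimal covers `C`.

For squarefree monomials `x_(C_1), …, x_(C_q)`, the colon ideal
`(x_(C_1), …, x_(C_(i-1))) : x_(C_i)` is generated by the variables `x_t` with
`C_j ⊆ C_i ∪ {t}` for some `j < i`, provided every earlier `C_j` contains such a `t ∉ C_i`.
This exchange condition survives adding a common new vertex to all covers, and across the two
halves of the recursion it holds with `t = x_(n-1)`: the earlier half contains `x_(n-1)` together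
with a minimal cover of `P_(n-2)` inside the later cover.
-/

theorem Finset.minimal_insert_iff {α : Type*} [DecidableEq α] {P Q : Finset α → Prop} {a : α}
    {D : Finset α} (ha : a ∉ D) (hQP : ∀ F, Q (insert a F) ↔ P F)
    (hforce : ∀ F ⊆ insert a D, Q F → a ∈ F) :
    Minimal Q (insert a D) ↔ Minimal P D := by
  refine ⟨fun h ↦ ⟨(hQP D).1 h.prop, fun F hF hFD ↦ ?_⟩,
    fun h ↦ ⟨(hQP D).2 h.prop, fun F hF hFD ↦ ?_⟩⟩
  · have hDF := h.le_of_le ((hQP F).2 hF) (insert_subset_insert a hFD)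
    exact (subset_insert_iff_of_notMem ha).1 ((subset_insert a D).trans hDF)
  · have haF := hforce F hFD hF
    rw [← insert_erase haF] at hF ⊢
    exact insert_subset_insert a (h.le_of_le ((hQP _).1 hF) (subset_insert_iff.1 hFD))

def IsPathCover (n : ℕ) (C : Finset ℕ) : Prop :=
  ∀ i, 1 ≤ i → i + 1 ≤ n → i ∈ C ∨ i + 1 ∈ C

theorem IsPathCover.mono {n : ℕ} {C D : Finset ℕ} (hC : IsPathCover n C) (hCD : C ⊆ D) :
    IsPathCover n D :=
  fun i h₁ h₂ ↦ (hC i h₁ h₂).imp (@hCD _) (@hCD _)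

theorem isPathCover_add_two_insert_iff {n : ℕ} {F : Finset ℕ} :
    IsPathCover (n + 2) (insert (n + 1) F) ↔ IsPathCover n F := by
  simp only [IsPathCover, Finset.mem_insert]
  grind

theorem isPathCover_add_one_insert_iff {n : ℕ} {F : Finset ℕ} :
    IsPathCover (n + 1) (insert (n + 1) F) ↔ IsPathCover n F := by
  simp only [IsPathCover, Finset.mem_insert]
  grind

theorem isPathCover_of_le_one {n : ℕ} (hn : n ≤ 1) (C : Finset ℕ) : IsPathCover n C :=
  fun _ _ _ ↦ by omega

theorem minimal_isPathCover_iff_of_le_one {n : ℕ} (hn : n ≤ 1) {C : Finset ℕ} :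
    Minimal (IsPathCover n) C ↔ C = ∅ := by
  rw [minimal_iff_isMin (fun _ _ _ _ ↦ isPathCover_of_le_one hn _)]
  simp [isPathCover_of_le_one hn]

theorem minimal_isPathCover_iff_forall_erase {n : ℕ} {C : Finset ℕ} :
    Minimal (IsPathCover n) C ↔ IsPathCover n C ∧ ∀ v ∈ C, ¬ IsPathCover n (C.erase v) :=
  Finset.minimal_iff_forall_erase fun _ _ h hts ↦ h.mono hts

theorem Minimal.notMem_of_isPathCover {n v : ℕ} {C : Finset ℕ}
    (hC : Minimal (IsPathCover n) C) (hv : n < v) : v ∉ C := fun hvC ↦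
  (minimal_isPathCover_iff_forall_erase.1 hC).2 v hvC fun i h₁ h₂ ↦ by
    simp only [Finset.mem_erase]
    grind [hC.prop i h₁ h₂]

theorem Minimal.pred_notMem_of_isPathCover {n : ℕ} {C : Finset ℕ}
    (hC : Minimal (IsPathCover (n + 1)) C) (hn : n + 1 ∈ C) : n ∉ C := by
  intro hn'
  refine (minimal_isPathCover_iff_forall_erase.1 hC).2 (n + 1) hn fun i h₁ h₂ ↦ ?_
  simp only [Finset.mem_erase]
  grind [hC.prop i h₁ h₂]

theorem minimal_isPathCover_add_two_insert_iff {n : ℕ} {D : Finset ℕ} (h₁ : n + 1 ∉ D)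
    (h₂ : n + 2 ∉ D) :
    Minimal (IsPathCover (n + 2)) (insert (n + 1) D) ↔ Minimal (IsPathCover n) D :=
  Finset.minimal_insert_iff h₁ (fun _ ↦ isPathCover_add_two_insert_iff) fun F hF hcov ↦
    (hcov (n + 1) (by omega) le_rfl).resolve_right fun h ↦ by simpa [h₂] using hF h

theorem minimal_isPathCover_add_one_insert_iff {n : ℕ} (hn : 1 ≤ n) {D : Finset ℕ} (h₀ : n ∉ D)
    (h₁ : n + 1 ∉ D) :
    Minimal (IsPathCover (n + 1)) (insert (n + 1) D) ↔ Minimal (IsPathCover n) D :=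
  Finset.minimal_insert_iff h₁ (fun _ ↦ isPathCover_add_one_insert_iff) fun F hF hcov ↦
    (hcov n hn le_rfl).resolve_left fun h ↦ by simpa [h₀] using hF h

theorem minimal_isPathCover_add_two_iff {n : ℕ} {C : Finset ℕ} :
    Minimal (IsPathCover (n + 2)) C ↔
      (∃ D, Minimal (IsPathCover n) D ∧ C = insert (n + 1) D) ∨
      (∃ E, Minimal (IsPathCover (n + 1)) E ∧ n + 1 ∉ E ∧ C = insert (n + 2) E) := by
  constructor
  · intro hC
    by_cases hlast : n + 2 ∈ C
    · have hprev := hC.pred_notMem_of_isPathCover hlast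
      rw [← Finset.insert_erase hlast] at hC ⊢
      refine .inr ⟨_, (minimal_isPathCover_add_one_insert_iff (by omega) ?_ ?_).1 hC, ?_, rfl⟩ <;>
        simp [hprev]
    · have hprev := (hC.prop (n + 1) (by omega) le_rfl).resolve_right hlast
      rw [← Finset.insert_erase hprev] at hC ⊢
      refine .inl ⟨_, (minimal_isPathCover_add_two_insert_iff ?_ ?_).1 hC, rfl⟩ <;>
        simp [hlast]
  · rintro (⟨D, hD, rfl⟩ | ⟨E, hE, hE₁, rfl⟩)
    · exact (minimal_isPathCover_add_two_insert_iff (hD.notMem_of_isPathCover (by omega))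
        (hD.notMem_of_isPathCover (by omega))).2 hD
    · exact (minimal_isPathCover_add_one_insert_iff (by omega) hE₁
        (hE.notMem_of_isPathCover (by omega))).2 hE

/-- The supports of the terms of the rooted list `R(P_n)`, in the same order. -/
def rootedCovers : ℕ → List (Finset ℕ)
  | 0 => [∅]
  | 1 => [∅]
  | 2 => [{1}, {2}]
  | n + 3 => (rootedCovers (n + 1)).map (insert (n + 2)) ++
      ((rootedCovers n).map (insert (n + 1))).map (insert (n + 3))

theorem mem_rootedCovers_iff : ∀ {n : ℕ} {C : Finset ℕ},
    C ∈ rootedCovers n ↔ Minimal (IsPathCover n) C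
  | 0, C | 1, C => by simp [rootedCovers, minimal_isPathCover_iff_of_le_one]
  | 2, C => by
    simp [rootedCovers, minimal_isPathCover_add_two_iff (n := 0),
      minimal_isPathCover_iff_of_le_one]
  | n + 3, C => by
    simp only [rootedCovers, List.mem_append, List.mem_map, mem_rootedCovers_iff]
    rw [minimal_isPathCover_add_two_iff]
    refine or_congr (by simp [eq_comm]) ⟨?_, ?_⟩
    · rintro ⟨_, ⟨D, hD, rfl⟩, rfl⟩
      refine ⟨_, minimal_isPathCover_add_two_iff.2 (.inl ⟨D, hD, rfl⟩), ?_, rfl⟩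
      simp [hD.notMem_of_isPathCover]
    · rintro ⟨E, hE, hE₂, rfl⟩
      obtain ⟨D, hD, rfl⟩ | ⟨_, -, -, rfl⟩ := minimal_isPathCover_add_two_iff.1 hE
      · exact ⟨_, ⟨D, hD, rfl⟩, rfl⟩
      · simp at hE₂

theorem notMem_of_mem_rootedCovers {n v : ℕ} {C : Finset ℕ} (hC : C ∈ rootedCovers n)
    (hv : n < v) : v ∉ C :=
  (mem_rootedCovers_iff.1 hC).notMem_of_isPathCover hv

/-- For the squarefree monomials `x_A`, `A ∈ L`, taken in this order, this exchange condition makes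
every colon ideal `(x_(L[0]), …, x_(L[i-1])) : x_(L[i])` generated by variables
(`colon_span_sqfreeMonomial`). -/
def HasLinearQuotients {α : Type*} [DecidableEq α] (L : List (Finset α)) : Prop :=
  ∀ i (hi : i < L.length), ∀ A ∈ L.take i, ∃ t ∈ A \ L[i], ∃ A' ∈ L.take i, A' ⊆ insert t L[i]

namespace HasLinearQuotients

variable {α : Type*} [DecidableEq α]

theorem map_insert {L : List (Finset α)} (h : HasLinearQuotients L) {a : α}
    (ha : ∀ A ∈ L, a ∉ A) : HasLinearQuotients (L.map (insert a)) := by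
  intro i hi A hA
  rw [List.length_map] at hi
  rw [← List.map_take, List.mem_map] at hA
  obtain ⟨A, hA, rfl⟩ := hA
  obtain ⟨t, ht, A', hA', hsub⟩ := h i hi A hA
  have hta : t ≠ a := fun h ↦ ha A (List.mem_of_mem_take hA) (h ▸ (Finset.mem_sdiff.1 ht).1)
  refine ⟨t, ?_, insert a A', by rw [← List.map_take]; exact List.mem_map_of_mem hA', ?_⟩
  · simp only [List.getElem_map, Finset.mem_sdiff, Finset.mem_insert] at ht ⊢
    tauto
  · rw [List.getElem_map, Finset.insert_comm]
    exact Finset.insert_subset_insert a hsub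

theorem append {L₁ L₂ : List (Finset α)} (h₁ : HasLinearQuotients L₁)
    (h₂ : HasLinearQuotients L₂)
    (hcross : ∀ A ∈ L₁, ∀ B ∈ L₂, ∃ t ∈ A \ B, ∃ A' ∈ L₁, A' ⊆ insert t B) :
    HasLinearQuotients (L₁ ++ L₂) := by
  intro i hi A hA
  rw [List.length_append] at hi
  by_cases hi₁ : i < L₁.length
  · rw [List.take_append_of_le_length hi₁.le] at hA ⊢
    rw [List.getElem_append_left hi₁]
    exact h₁ i hi₁ A hA
  · rw [not_lt] at hi₁
    rw [List.take_append, List.take_of_length_le hi₁] at hA ⊢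
    rw [List.getElem_append_right hi₁]
    rcases List.mem_append.1 hA with hA | hA
    · obtain ⟨t, ht, A', hA', hsub⟩ := hcross A hA _ (List.getElem_mem _)
      exact ⟨t, ht, A', List.mem_append_left _ hA', hsub⟩
    · obtain ⟨t, ht, A', hA', hsub⟩ := h₂ (i - L₁.length) (by omega) A hA
      exact ⟨t, ht, A', List.mem_append_right _ hA', hsub⟩

end HasLinearQuotients

theorem hasLinearQuotients_rootedCovers : ∀ n, HasLinearQuotients (rootedCovers n)
  | 0 | 1 | 2 => by unfold HasLinearQuotients rootedCovers; decide
  | n + 3 => by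
    have hfirst := (hasLinearQuotients_rootedCovers (n + 1)).map_insert (a := n + 2)
      fun A hA ↦ notMem_of_mem_rootedCovers hA (by omega)
    have hsecond := ((hasLinearQuotients_rootedCovers n).map_insert (a := n + 1)
      fun A hA ↦ notMem_of_mem_rootedCovers hA (by omega)).map_insert (a := n + 3) (by
        simp only [List.mem_map]
        rintro _ ⟨E, hE, rfl⟩
        simp [notMem_of_mem_rootedCovers hE (by omega : n < n + 3)])
    refine hfirst.append hsecond ?_
    simp only [List.mem_map]
    rintro _ ⟨D, -, rfl⟩ _ ⟨_, ⟨E, hE, rfl⟩, rfl⟩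
    have hcov : IsPathCover (n + 1) (insert (n + 1) E) :=
      isPathCover_add_one_insert_iff.2 (mem_rootedCovers_iff.1 hE).prop
    obtain ⟨C, hCE, hC⟩ := exists_minimal_le_of_wellFoundedLT _ _ hcov
    refine ⟨n + 2, ?_, insert (n + 2) C, ⟨C, mem_rootedCovers_iff.2 hC, rfl⟩, ?_⟩
    · simp [notMem_of_mem_rootedCovers hE (by omega : n < n + 2)]
    · exact Finset.insert_subset_insert _ (hCE.trans (Finset.subset_insert _ _))

namespace Finset

variable {σ : Type*} [DecidableEq σ]

theorem toFinsupp_val_apply (C : Finset σ) (i : σ) :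
    C.val.toFinsupp i = if i ∈ C then 1 else 0 := by
  simp [Multiset.count_eq_of_nodup C.nodup]

@[simp]
theorem support_toFinsupp_val (C : Finset σ) : C.val.toFinsupp.support = C := by
  simp

theorem toFinsupp_val_le_toFinsupp_val_iff {C D : Finset σ} :
    C.val.toFinsupp ≤ D.val.toFinsupp ↔ C ⊆ D := by
  rw [← Finsupp.coe_orderIsoMultiset_symm, OrderIso.le_iff_le, val_le_iff]

theorem toFinsupp_val_support_le (a : σ →₀ ℕ) : a.support.val.toFinsupp ≤ a := fun i ↦ by
  rw [toFinsupp_val_apply]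
  split_ifs with h
  · exact Nat.one_le_iff_ne_zero.2 (Finsupp.mem_support_iff.1 h)
  · exact Nat.zero_le _

end Finset

theorem MvPolynomial.support_mul_monomial_one {σ R : Type*} [CommSemiring R]
    (p : MvPolynomial σ R) (s : σ →₀ ℕ) :
    (p * monomial s 1).support = p.support.map (addRightEmbedding s) :=
  AddMonoidAlgebra.support_coeff_mul_single p _ (by simp) _

section SqfreeMonomial

variable {σ R : Type*} [DecidableEq σ] [CommSemiring R]

variable (R) in
noncomputable def sqfreeMonomial (C : Finset σ) : MvPolynomial σ R :=
  monomial C.val.toFinsupp 1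

@[simp]
theorem sqfreeMonomial_empty : sqfreeMonomial R (∅ : Finset σ) = 1 := by
  simp [sqfreeMonomial]

@[simp]
theorem sqfreeMonomial_singleton (a : σ) : sqfreeMonomial R {a} = X a := by
  simp [sqfreeMonomial, X]

theorem sqfreeMonomial_insert {a : σ} {C : Finset σ} (ha : a ∉ C) :
    sqfreeMonomial R (insert a C) = X a * sqfreeMonomial R C := by
  rw [sqfreeMonomial, sqfreeMonomial, Finset.insert_val_of_notMem ha, ← Multiset.singleton_add,
    Multiset.toFinsupp_add, Multiset.toFinsupp_singleton, X, monomial_mul, one_mul]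

theorem exists_toFinsupp_val_le_add_iff {S : Set (Finset σ)} {B : Finset σ}
    (h : ∀ A ∈ S, ∃ t ∈ A \ B, ∃ A' ∈ S, A' ⊆ insert t B) (m : σ →₀ ℕ) :
    (∃ A ∈ S, A.val.toFinsupp ≤ m + B.val.toFinsupp) ↔
      ∃ t ∈ {t | t ∉ B ∧ ∃ A ∈ S, A ⊆ insert t B}, m t ≠ 0 := by
  constructor
  · rintro ⟨A, hA, hle⟩
    obtain ⟨t, ht, A', hA', hsub⟩ := h A hA
    rw [Finset.mem_sdiff] at ht
    have := hle t
    rw [Finsupp.add_apply, Finset.toFinsupp_val_apply, Finset.toFinsupp_val_apply, if_pos ht.1,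
      if_neg ht.2] at this
    exact ⟨t, ⟨ht.2, A', hA', hsub⟩, by omega⟩
  · rintro ⟨t, ⟨htB, A, hA, hsub⟩, hmt⟩
    refine ⟨A, hA, fun i ↦ ?_⟩
    have := @hsub i
    simp only [Finsupp.add_apply, Finset.toFinsupp_val_apply, Finset.mem_insert] at this ⊢
    split_ifs <;> grind

theorem colon_span_sqfreeMonomial {S : Set (Finset σ)} {B : Finset σ}
    (h : ∀ A ∈ S, ∃ t ∈ A \ B, ∃ A' ∈ S, A' ⊆ insert t B) :
    (Ideal.span (sqfreeMonomial R '' S)).colon (Ideal.span {sqfreeMonomial R B} : Set _) =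
      Ideal.span (X '' {t | t ∉ B ∧ ∃ A ∈ S, A ⊆ insert t B}) := by
  have hS : sqfreeMonomial R '' S =
      (fun s ↦ monomial s (1 : R)) '' ((fun A : Finset σ ↦ A.val.toFinsupp) '' S) := by
    rw [Set.image_image]; rfl
  ext f
  rw [Ideal.colon_span, Submodule.mem_colon_singleton, smul_eq_mul, sqfreeMonomial, hS,
    mem_ideal_span_monomial_image, mem_ideal_span_X_image, support_mul_monomial_one]
  simp only [Finset.mem_map, addRightEmbedding_apply, forall_exists_index, and_imp,
    forall_apply_eq_imp_iff₂, Set.exists_mem_image]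
  exact forall₂_congr fun m _ ↦ exists_toFinsupp_val_le_add_iff h m

end SqfreeMonomial

section Field

variable {k : Type*} [Field k]

theorem HasLinearQuotients.genByVars_colon {L : List (Finset ℕ)} (h : HasLinearQuotients L)
    {i : ℕ} (hi : i < L.length) :
    genByVars (Submodule.colon (Ideal.span {x | x ∈ (L.map (sqfreeMonomial k)).take i})
      (Ideal.span {(L.map (sqfreeMonomial k)).getD i 1})) := by
  have hget : (L.map (sqfreeMonomial k)).getD i 1 = sqfreeMonomial k L[i] := by
    rw [List.getD_eq_getElem _ _ (by simpa using hi), List.getElem_map]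
  have htake : {x | x ∈ (L.map (sqfreeMonomial k)).take i} =
      sqfreeMonomial k '' {A | A ∈ L.take i} := by
    ext
    simp [← List.map_take]
  rw [hget, htake, colon_span_sqfreeMonomial (S := {A | A ∈ L.take i}) (h i hi)]
  exact ⟨_, rfl⟩

theorem mem_minGens_iff_of_monomial_mem_iff {I : Ideal (MvPolynomial ℕ k)}
    {P : Finset ℕ → Prop} (hI : ∀ a, monomial a 1 ∈ I ↔ P a.support) {u : MvPolynomial ℕ k} :
    u ∈ minGens I ↔ ∃ C, Minimal P C ∧ u = sqfreeMonomial k C := by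
  have hmem (C : Finset ℕ) : sqfreeMonomial k C ∈ I ↔ P C := by
    rw [sqfreeMonomial, hI, Finset.support_toFinsupp_val]
  have hdvd (C D : Finset ℕ) : sqfreeMonomial k C ∣ sqfreeMonomial k D ↔ C ⊆ D := by
    rw [sqfreeMonomial, sqfreeMonomial, monomial_one_dvd_monomial_one,
      Finset.toFinsupp_val_le_toFinsupp_val_iff]
  constructor
  · rintro ⟨⟨a, rfl⟩, hu, hmin⟩
    have ha : sqfreeMonomial k a.support = monomial a 1 :=
      hmin _ ⟨_, rfl⟩ ((hmem _).2 ((hI a).1 hu))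
        (monomial_one_dvd_monomial_one.2 (Finset.toFinsupp_val_support_le a))
    refine ⟨a.support, ⟨(hI a).1 hu, fun F hF hFa ↦ ?_⟩, ha.symm⟩
    have hFeq :=
      hmin (sqfreeMonomial k F) ⟨_, rfl⟩ ((hmem F).2 hF) (ha ▸ (hdvd F a.support).2 hFa)
    exact (hdvd _ _).1 (by rw [ha, ← hFeq])
  · rintro ⟨C, hC, rfl⟩
    refine ⟨⟨_, rfl⟩, (hmem C).2 hC.prop, ?_⟩
    rintro _ ⟨b, rfl⟩ hb hbC
    have hbC : b ≤ C.val.toFinsupp := monomial_one_dvd_monomial_one.1 hbC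
    have hCb : C ⊆ b.support :=
      hC.le_of_le ((hI b).1 hb) (by simpa using Finsupp.support_mono hbC)
    rw [sqfreeMonomial, le_antisymm hbC ((Finset.toFinsupp_val_le_toFinsupp_val_iff.2 hCb).trans
      (Finset.toFinsupp_val_support_le b))]

theorem monomial_mem_pathCoverIdeal_iff {n : ℕ} {a : ℕ →₀ ℕ} :
    monomial a (1 : k) ∈ pathCoverIdeal k n ↔ IsPathCover n a.support := by
  have hedge (i : ℕ) : monomial a (1 : k) ∈ Ideal.span {X i, X (i + 1)} ↔
      i ∈ a.support ∨ i + 1 ∈ a.support := by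
    rw [← Set.image_pair, mem_ideal_span_X_image]
    simp
  simp only [pathCoverIdeal, Ideal.mem_iInf, Finset.mem_Icc, hedge]
  exact ⟨fun h i h₁ h₂ ↦ h i ⟨h₁, by omega⟩, fun h i hi ↦ h i hi.1 (by omega)⟩

theorem rootedList_eq_map_sqfreeMonomial :
    ∀ n, rootedList k n = (rootedCovers n).map (sqfreeMonomial k)
  | 0 | 1 | 2 => by simp [rootedList, rootedCovers]
  | 3 => by simp [rootedList, rootedCovers, sqfreeMonomial_insert, mul_comm]
  | n + 4 => by
    rw [rootedList, rootedCovers, rootedList_eq_map_sqfreeMonomial (n + 2),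
      rootedList_eq_map_sqfreeMonomial (n + 1)]
    simp only [List.map_map, List.map_append]
    congr 1 <;> refine List.map_congr_left fun C hC ↦ ?_
    · simp [sqfreeMonomial_insert (notMem_of_mem_rootedCovers hC (by omega : n + 2 < n + 3))]
    · have h₂ := notMem_of_mem_rootedCovers hC (by omega : n + 1 < n + 2)
      have h₄ : n + 4 ∉ insert (n + 2) C := by
        simp [notMem_of_mem_rootedCovers hC (by omega : n + 1 < n + 4)]
      simp [sqfreeMonomial_insert h₂, sqfreeMonomial_insert h₄, mul_assoc]

end Field

theorem rootedList_eq_minGens_and_linearQuotients_general (k : Type*) [Field k]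
    (n : ℕ) :
    {u | u ∈ rootedList k n} = minGens (pathCoverIdeal k n) ∧
    ∀ i, 0 < i → i < (rootedList k n).length →
      genByVars (Submodule.colon
        (Ideal.span {x | x ∈ (rootedList k n).take i})
        (Ideal.span {(rootedList k n).getD i 1})) := by
  rw [rootedList_eq_map_sqfreeMonomial]
  refine ⟨?_, fun i _ hi ↦ (hasLinearQuotients_rootedCovers n).genByVars_colon (by simpa using hi)⟩
  ext u
  rw [mem_minGens_iff_of_monomial_mem_iff fun _ ↦ monomial_mem_pathCoverIdeal_iff]
  simp [mem_rootedCovers_iff, eq_comm]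

/-- For `n ≥ 1`, the terms of the rooted list `R(P_n)` are exactly the
minimal monomial generators of the cover ideal `J(P_n)`, and `J(P_n)` has linear
quotients with respect to the rooted list: each successive colon ideal
`(u_1, …, u_{i-1}) : (u_i)` is generated by a subset of the variables. -/
theorem rootedList_eq_minGens_and_linearQuotients (k : Type*) [Field k]
    (n : ℕ) (hn : 1 ≤ n) :
    {u | u ∈ rootedList k n} = minGens (pathCoverIdeal k n) ∧
    ∀ i, 0 < i → i < (rootedList k n).length →
      genByVars (Submodule.colon
        (Ideal.span {x | x ∈ (rootedList k n).take i})
        (Ideal.span {(rootedList k n).getD i 1})) :=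
  rootedList_eq_minGens_and_linearQuotients_general k n
end

section
/- Let 2 ≤ n ≤ 4 and s ≥ 1. Then G(J(P_n)^s) = F(J(P_n)^s), i.e., every s-fold product of minimal generators of J(P_n) is a minimal generator of J(P_n)^s. Moreover, every U ∈ F(J(P_n)^s) has a unique expression as an s-fold product of minimal generators of J(P_n) (unique exponent vector). -/
open MvPolynomial

/-!
The minimal generators of `J(P_n)` for `n ≤ 4` are `x₁, x₂`; `x₂, x₁x₃`; and
`x₂x₃, x₁x₃, x₂x₄`. Their exponent vectors have rigid sums: two lists of `s` of them whose
exponent sums are comparable agree up to order, because the multiplicity of each generator is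
a monotone function of the exponent sum (a single coordinate, or `x₂ + x₃ - s` for `x₂x₃`).
Hence the `s`-fold products form an antichain for divisibility, so they are exactly the
minimal generators of `J(P_n)^s`, and each has a unique expression.
-/

open Finsupp Pointwise

section MonomialIdeal

variable {R : Type*} [CommSemiring R]

variable (R) in
noncomputable def monomialIdeal (S : Set (ℕ →₀ ℕ)) : Ideal (MvPolynomial ℕ R) :=
  Ideal.span ((fun d => monomial d (1 : R)) '' S)

theorem monomial_mem_monomialIdeal_iff [Nontrivial R] {S : Set (ℕ →₀ ℕ)} {d : ℕ →₀ ℕ} :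
    monomial d (1 : R) ∈ monomialIdeal R S ↔ ∃ b ∈ S, b ≤ d := by
  simp [monomialIdeal, mem_ideal_span_monomial_image]

theorem list_prod_map_monomial_one (A : List (ℕ →₀ ℕ)) :
    (A.map fun d => monomial d (1 : R)).prod = monomial A.sum 1 := by
  induction A with
  | nil => simp
  | cons a A ih => simp [ih, monomial_mul]

def listSums (S : Set (ℕ →₀ ℕ)) (s : ℕ) : Set (ℕ →₀ ℕ) :=
  {d | ∃ A : List (ℕ →₀ ℕ), A.length = s ∧ (∀ b ∈ A, b ∈ S) ∧ A.sum = d}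

theorem listSums_zero (S : Set (ℕ →₀ ℕ)) : listSums S 0 = {0} := by
  ext d
  simp [listSums, eq_comm]

theorem listSums_succ (S : Set (ℕ →₀ ℕ)) (s : ℕ) :
    listSums S (s + 1) = S + listSums S s := by
  ext d
  constructor
  · rintro ⟨_ | ⟨b, A⟩, hlen, hA, rfl⟩
    · simp at hlen
    · simp only [List.length_cons, Nat.add_right_cancel_iff, List.mem_cons,
        forall_eq_or_imp] at hlen hA
      exact Set.add_mem_add hA.1 ⟨A, hlen, hA.2, rfl⟩
  · rintro ⟨b, hb, _, ⟨A, rfl, hA, rfl⟩, rfl⟩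
    exact ⟨b :: A, rfl, by simpa [hb] using hA, rfl⟩

theorem monomialIdeal_mul (S T : Set (ℕ →₀ ℕ)) :
    monomialIdeal R S * monomialIdeal R T = monomialIdeal R (S + T) := by
  rw [monomialIdeal, monomialIdeal, monomialIdeal, Ideal.span_mul_span', ← Set.image2_mul,
    ← Set.image2_add, Set.image_image2, Set.image2_image_left, Set.image2_image_right]
  simp only [monomial_mul, one_mul]

theorem monomialIdeal_pow (S : Set (ℕ →₀ ℕ)) (s : ℕ) :
    monomialIdeal R S ^ s = monomialIdeal R (listSums S s) := by
  induction s with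
  | zero => simp [listSums_zero, monomialIdeal, Ideal.one_eq_top]
  | succ s ih => rw [pow_succ', ih, monomialIdeal_mul, listSums_succ]

end MonomialIdeal

theorem List.exists_eq_map_of_forall_mem_image {α β : Type*} {f : α → β} {S : Set α}
    {L : List β} (h : ∀ u ∈ L, u ∈ f '' S) : ∃ A : List α, (∀ a ∈ A, a ∈ S) ∧ A.map f = L := by
  have : L ∈ Set.range (List.map fun a : S => f a) := by
    rw [Set.range_list_map]
    simpa [Set.image_eq_range] using h
  obtain ⟨A, rfl⟩ := this
  exact ⟨A.map (↑), by simp +contextual, by simp⟩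

section MinGens

variable {k : Type*} [Field k] {S : Set (ℕ →₀ ℕ)}

theorem minGens_monomialIdeal (hS : IsAntichain (· ≤ ·) S) :
    minGens (monomialIdeal k S) = (fun d => monomial d (1 : k)) '' S := by
  ext m
  constructor
  · rintro ⟨⟨a, rfl⟩, hmem, hmin⟩
    obtain ⟨b, hb, hba⟩ := monomial_mem_monomialIdeal_iff.mp hmem
    refine ⟨b, hb, hmin _ ⟨b, rfl⟩ (Ideal.subset_span ⟨b, hb, rfl⟩) ?_⟩
    exact monomial_dvd_monomial.mpr ⟨Or.inr hba, dvd_rfl⟩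
  · rintro ⟨b, hb, rfl⟩
    refine ⟨⟨b, rfl⟩, Ideal.subset_span ⟨b, hb, rfl⟩, ?_⟩
    rintro _ ⟨a, rfl⟩ hmem hdvd
    have hab : a ≤ b := by simpa using monomial_dvd_monomial.mp hdvd
    obtain ⟨c, hc, hca⟩ := monomial_mem_monomialIdeal_iff.mp hmem
    rw [le_antisymm hab (hS.eq hc hb (hca.trans hab) ▸ hca)]

theorem sFold_monomialIdeal (hS : IsAntichain (· ≤ ·) S) (s : ℕ) :
    sFold (monomialIdeal k S) s = (fun d => monomial d (1 : k)) '' listSums S s := by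
  ext m
  simp only [sFold, minGens_monomialIdeal hS]
  constructor
  · rintro ⟨L, rfl, hL, rfl⟩
    obtain ⟨A, hA, rfl⟩ := List.exists_eq_map_of_forall_mem_image hL
    exact ⟨A.sum, ⟨A, by simp, hA, rfl⟩, (list_prod_map_monomial_one A).symm⟩
  · rintro ⟨_, ⟨A, rfl, hA, rfl⟩, rfl⟩
    refine ⟨A.map _, by simp, ?_, (list_prod_map_monomial_one A).symm⟩
    simpa using hA

end MinGens

def HasRigidSums (B : Set (ℕ →₀ ℕ)) : Prop :=
  ∀ ⦃A₁ A₂ : List (ℕ →₀ ℕ)⦄, (∀ b ∈ A₁, b ∈ B) → (∀ b ∈ A₂, b ∈ B) →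
    A₁.length = A₂.length → A₁.sum ≤ A₂.sum → A₁.Perm A₂

namespace HasRigidSums

variable {B : Set (ℕ →₀ ℕ)}

theorem isAntichain (hB : HasRigidSums B) : IsAntichain (· ≤ ·) B := by
  intro b hb b' hb' hne hle
  have := hB (A₁ := [b]) (A₂ := [b']) (by simpa) (by simpa) rfl (by simpa)
  exact hne (by simpa using this)

theorem isAntichain_listSums (hB : HasRigidSums B) (s : ℕ) :
    IsAntichain (· ≤ ·) (listSums B s) := by
  rintro _ ⟨A₁, rfl, hA₁, rfl⟩ _ ⟨A₂, hlen, hA₂, rfl⟩ hne hle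
  exact hne (hB hA₁ hA₂ hlen.symm hle).sum_eq

variable {k : Type*} [Field k]

theorem minGens_pow (hB : HasRigidSums B) (s : ℕ) :
    minGens (monomialIdeal k B ^ s) = sFold (monomialIdeal k B) s := by
  rw [monomialIdeal_pow, minGens_monomialIdeal (hB.isAntichain_listSums s),
    sFold_monomialIdeal hB.isAntichain]

theorem perm_of_prod_eq (hB : HasRigidSums B) {L₁ L₂ : List (MvPolynomial ℕ k)}
    (hlen : L₁.length = L₂.length) (h₁ : ∀ u ∈ L₁, u ∈ minGens (monomialIdeal k B))
    (h₂ : ∀ u ∈ L₂, u ∈ minGens (monomialIdeal k B)) (hprod : L₁.prod = L₂.prod) :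
    L₁.Perm L₂ := by
  rw [minGens_monomialIdeal hB.isAntichain] at h₁ h₂
  obtain ⟨A₁, hA₁, rfl⟩ := List.exists_eq_map_of_forall_mem_image h₁
  obtain ⟨A₂, hA₂, rfl⟩ := List.exists_eq_map_of_forall_mem_image h₂
  rw [list_prod_map_monomial_one, list_prod_map_monomial_one] at hprod
  have hsum : A₁.sum = A₂.sum := monomial_left_injective one_ne_zero hprod
  exact (hB hA₁ hA₂ (by simpa using hlen) hsum.le).map _

end HasRigidSums

theorem hasRigidSums_of_count_le {B : Set (ℕ →₀ ℕ)} [Finite B]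
    (h : ∀ b ∈ B, ∀ ⦃A₁ A₂ : List (ℕ →₀ ℕ)⦄, (∀ u ∈ A₁, u ∈ B) → (∀ u ∈ A₂, u ∈ B) →
      A₁.length = A₂.length → A₁.sum ≤ A₂.sum → A₁.count b ≤ A₂.count b) :
    HasRigidSums B := by
  intro A₁ A₂ h₁ h₂ hlen hle
  rw [List.perm_iff_count]
  intro b
  by_cases hb : b ∈ B
  · have hF := Set.toFinite B
    have hcard (A : List (ℕ →₀ ℕ)) (hA : ∀ u ∈ A, u ∈ B) :
        ∑ c ∈ hF.toFinset, A.count c = A.length := by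
      simpa using Multiset.sum_count_eq_card (s := hF.toFinset) (m := A) (by simpa using hA)
    have hle_count : ∀ c ∈ hF.toFinset, A₁.count c ≤ A₂.count c := fun c hc =>
      h c (hF.mem_toFinset.mp hc) h₁ h₂ hlen hle
    rw [← hcard A₁ h₁, ← hcard A₂ h₂] at hlen
    exact (Finset.sum_eq_sum_iff_of_le hle_count).mp hlen b (hF.mem_toFinset.mpr hb)
  · rw [List.count_eq_zero_of_not_mem (fun h => hb (h₁ b h)),
      List.count_eq_zero_of_not_mem (fun h => hb (h₂ b h))]

section Weight

variable {B : Set (ℕ →₀ ℕ)} {b : ℕ →₀ ℕ} {J : Finset ℕ} {c : ℕ}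

theorem sum_list_sum_apply_eq (hb : ∑ j ∈ J, b j = c + 1)
    (hB : ∀ u ∈ B, u ≠ b → ∑ j ∈ J, u j = c) {A : List (ℕ →₀ ℕ)} (hA : ∀ u ∈ A, u ∈ B) :
    ∑ j ∈ J, A.sum j = c * A.length + A.count b := by
  induction A with
  | nil => simp
  | cons a A ih =>
    simp only [List.mem_cons, forall_eq_or_imp] at hA
    simp only [List.sum_cons, Finsupp.add_apply, Finset.sum_add_distrib, ih hA.2,
      List.length_cons, List.count_cons, beq_iff_eq]
    by_cases hab : a = b
    · subst hab; rw [hb, if_pos rfl]; ring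
    · rw [hB a hA.1 hab, if_neg hab]; ring

theorem count_le_count_of_list_sum_le (hb : ∑ j ∈ J, b j = c + 1)
    (hB : ∀ u ∈ B, u ≠ b → ∑ j ∈ J, u j = c) ⦃A₁ A₂ : List (ℕ →₀ ℕ)⦄
    (h₁ : ∀ u ∈ A₁, u ∈ B) (h₂ : ∀ u ∈ A₂, u ∈ B) (hlen : A₁.length = A₂.length)
    (hle : A₁.sum ≤ A₂.sum) : A₁.count b ≤ A₂.count b := by
  have hJ : ∑ j ∈ J, A₁.sum j ≤ ∑ j ∈ J, A₂.sum j := Finset.sum_le_sum fun j _ => hle j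
  rw [sum_list_sum_apply_eq hb hB h₁, sum_list_sum_apply_eq hb hB h₂, hlen] at hJ
  omega

end Weight

section PathCover

variable {k : Type*} [Field k]

theorem mem_pathCoverIdeal_iff {n : ℕ} {p : MvPolynomial ℕ k} :
    p ∈ pathCoverIdeal k n ↔
      ∀ d ∈ p.support, ∀ i ∈ Finset.Icc 1 (n - 1), d i ≠ 0 ∨ d (i + 1) ≠ 0 := by
  simp only [pathCoverIdeal, Submodule.mem_iInf, ← Set.image_pair, mem_ideal_span_X_image,
    Set.mem_insert_iff, Set.mem_singleton_iff, exists_eq_or_imp, exists_eq_left]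
  exact ⟨fun h d hd i hi => h i hi d hd, fun h i hi d hd => h d hd i hi⟩

theorem pathCoverIdeal_eq_monomialIdeal {n : ℕ} {B : Set (ℕ →₀ ℕ)}
    (hB : ∀ d : ℕ →₀ ℕ,
      (∀ i ∈ Finset.Icc 1 (n - 1), d i ≠ 0 ∨ d (i + 1) ≠ 0) ↔ ∃ b ∈ B, b ≤ d) :
    pathCoverIdeal k n = monomialIdeal k B := by
  ext p
  rw [mem_pathCoverIdeal_iff, monomialIdeal, mem_ideal_span_monomial_image]
  exact forall₂_congr fun d _ => hB d

end PathCover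

theorem single_one_add_single_one_le_iff {i j : ℕ} (hij : i ≠ j) {d : ℕ →₀ ℕ} :
    single i 1 + single j 1 ≤ d ↔ 1 ≤ d i ∧ 1 ≤ d j := by
  constructor
  · intro h
    have hi := h i
    have hj := h j
    simp only [Finsupp.coe_add, Pi.add_apply, single_eq_same, single_eq_of_ne hij,
      single_eq_of_ne hij.symm] at hi hj
    omega
  · rintro ⟨hi, hj⟩ t
    simp only [Finsupp.coe_add, Pi.add_apply, single_apply]
    split_ifs <;> subst_vars <;> omega

section SmallPaths

variable {k : Type*} [Field k]

theorem pathCoverIdeal_two : pathCoverIdeal k 2 = monomialIdeal k {single 1 1, single 2 1} := by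
  refine pathCoverIdeal_eq_monomialIdeal fun d => ?_
  rw [show Finset.Icc 1 (2 - 1) = {1} from rfl]
  simp only [Finset.mem_singleton, forall_eq, Set.exists_mem_insert, Set.mem_singleton_iff,
    exists_eq_left, Nat.reduceAdd, single_le_iff]
  omega

theorem pathCoverIdeal_three :
    pathCoverIdeal k 3 = monomialIdeal k {single 2 1, single 1 1 + single 3 1} := by
  refine pathCoverIdeal_eq_monomialIdeal fun d => ?_
  rw [show Finset.Icc 1 (3 - 1) = {1, 2} from rfl]
  simp +decide only [Finset.forall_mem_insert, Finset.mem_singleton, forall_eq,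
    Set.exists_mem_insert, Set.mem_singleton_iff, exists_eq_left, Nat.reduceAdd, single_le_iff,
    single_one_add_single_one_le_iff]
  omega

theorem pathCoverIdeal_four :
    pathCoverIdeal k 4 = monomialIdeal k
      {single 2 1 + single 3 1, single 1 1 + single 3 1, single 2 1 + single 4 1} := by
  refine pathCoverIdeal_eq_monomialIdeal fun d => ?_
  rw [show Finset.Icc 1 (4 - 1) = {1, 2, 3} from rfl]
  simp +decide only [Finset.forall_mem_insert, Finset.mem_singleton, forall_eq,
    Set.exists_mem_insert, Set.mem_singleton_iff, exists_eq_left, Nat.reduceAdd,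
    single_one_add_single_one_le_iff]
  omega

end SmallPaths

theorem hasRigidSums_two : HasRigidSums {single 1 1, single 2 1} := by
  refine hasRigidSums_of_count_le fun b hb => ?_
  rcases hb with rfl | rfl
  · exact count_le_count_of_list_sum_le (J := {1}) (c := 0) (by simp) (by simp)
  · exact count_le_count_of_list_sum_le (J := {2}) (c := 0) (by simp) (by simp)

theorem hasRigidSums_three : HasRigidSums {single 2 1, single 1 1 + single 3 1} := by
  refine hasRigidSums_of_count_le fun b hb => ?_
  rcases hb with rfl | rfl
  · exact count_le_count_of_list_sum_le (J := {2}) (c := 0) (by simp) (by simp)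
  · exact count_le_count_of_list_sum_le (J := {1}) (c := 0) (by simp) (by simp)

theorem hasRigidSums_four :
    HasRigidSums {single 2 1 + single 3 1, single 1 1 + single 3 1, single 2 1 + single 4 1} := by
  refine hasRigidSums_of_count_le fun b hb => ?_
  rcases hb with rfl | rfl | rfl
  · exact count_le_count_of_list_sum_le (J := {2, 3}) (c := 1) (by simp) (by simp)
  · exact count_le_count_of_list_sum_le (J := {1}) (c := 0) (by simp) (by simp)
  · exact count_le_count_of_list_sum_le (J := {4}) (c := 0) (by simp) (by simp)

theorem small_paths_sFold_minimal_and_unique_general (k : Type*) [Field k]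
    (n s : ℕ) (h2 : 2 ≤ n) (h4 : n ≤ 4) :
    minGens ((pathCoverIdeal k n) ^ s) = sFold (pathCoverIdeal k n) s ∧
    ∀ L1 L2 : List (MvPolynomial ℕ k),
      L1.length = s → L2.length = s →
      (∀ u ∈ L1, u ∈ minGens (pathCoverIdeal k n)) →
      (∀ u ∈ L2, u ∈ minGens (pathCoverIdeal k n)) →
      L1.prod = L2.prod → L1.Perm L2 := by
  obtain ⟨B, hI, hB⟩ : ∃ B : Set (ℕ →₀ ℕ), pathCoverIdeal k n = monomialIdeal k B ∧
      HasRigidSums B := by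
    interval_cases n
    · exact ⟨_, pathCoverIdeal_two, hasRigidSums_two⟩
    · exact ⟨_, pathCoverIdeal_three, hasRigidSums_three⟩
    · exact ⟨_, pathCoverIdeal_four, hasRigidSums_four⟩
  rw [hI]
  exact ⟨hB.minGens_pow s, fun L₁ L₂ h₁ h₂ => hB.perm_of_prod_eq (h₁.trans h₂.symm)⟩

/-- For `2 ≤ n ≤ 4` and `s ≥ 1`, `G(J(P_n)^s) = F(J(P_n)^s)`, and every
`s`-fold product of minimal generators of `J(P_n)` has a unique expression (two lists of
minimal generators of length `s` with the same product are permutations of each other). -/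
theorem small_paths_sFold_minimal_and_unique (k : Type*) [Field k]
    (n s : ℕ) (h2 : 2 ≤ n) (h4 : n ≤ 4) (hs : 1 ≤ s) :
    minGens ((pathCoverIdeal k n) ^ s) = sFold (pathCoverIdeal k n) s ∧
    ∀ L1 L2 : List (MvPolynomial ℕ k),
      L1.length = s → L2.length = s →
      (∀ u ∈ L1, u ∈ minGens (pathCoverIdeal k n)) →
      (∀ u ∈ L2, u ∈ minGens (pathCoverIdeal k n)) →
      L1.prod = L2.prod → L1.Perm L2 :=
  small_paths_sFold_minimal_and_unique_general k n s h2 h4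
end

section
/- Let u_1 = x_2x_4, u_2 = x_1x_3x_4, u_3 = x_1x_3x_5, u_4 = x_2x_3x_5 be the minimal generators of the cover ideal J(P_5) of the path on 5 vertices (this is the rooted list R(P_5)). If U = u_1^α u_2^β u_3^γ u_4^δ is an s-fold product that is NOT a minimal generator of J(P_5)^s (i.e., U ∈ F(J(P_5)^s) \ G(J(P_5)^s)), then β > 0 and δ > 0. -/
open MvPolynomial

namespace P5Aux

open MvPolynomial

/-- If a monomial lies in `(x_a, x_b)^s` with `a ≠ b`, then the sum of its exponents
at `a` and `b` is at least `s`. -/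
lemma edge_le {k : Type*} [Field k] {a b s : ℕ} (hab : a ≠ b) {v : ℕ →₀ ℕ}
    (h : (monomial v (1 : k)) ∈
      (Ideal.span {(X a : MvPolynomial ℕ k), X b}) ^ s) :
    s ≤ v a + v b := by
  classical
  set f : ℕ → Polynomial k := fun j => if j = a ∨ j = b then Polynomial.X else 1 with hf
  set φ : MvPolynomial ℕ k →+* Polynomial k := (aeval f).toRingHom with hφ
  have hmap : φ (monomial v 1) ∈
      Ideal.map φ ((Ideal.span {(X a : MvPolynomial ℕ k), X b}) ^ s) :=
    Ideal.mem_map_of_mem _ h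
  rw [Ideal.map_pow, Ideal.map_span] at hmap
  have himg : φ '' {(X a : MvPolynomial ℕ k), X b} = {Polynomial.X} := by
    rw [Set.image_pair]
    have h1 : φ (X a : MvPolynomial ℕ k) = Polynomial.X := by
      simp [hφ, hf]
    have h2 : φ (X b : MvPolynomial ℕ k) = Polynomial.X := by
      simp [hφ, hf]
    rw [h1, h2, Set.pair_eq_singleton]
  rw [himg, Ideal.span_singleton_pow, Ideal.mem_span_singleton] at hmap
  have hφm : φ (monomial v 1) = Polynomial.X ^ (v a + v b) := by
    show aeval f (monomial v 1) = _
    rw [aeval_monomial, map_one, one_mul, Finsupp.prod]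
    have hcongr : ∀ i ∈ v.support, (f i) ^ v i =
        Polynomial.X ^ ((if i = a then v i else 0) + (if i = b then v i else 0)) := by
      intro i _
      by_cases hia : i = a
      · subst hia
        simp [hf, hab]
      · by_cases hib : i = b
        · subst hib
          simp [hf, hia]
        · simp [hf, hia, hib]
    rw [Finset.prod_congr rfl hcongr, Finset.prod_pow_eq_pow_sum, Finset.sum_add_distrib,
      Finset.sum_ite_eq' v.support a v, Finset.sum_ite_eq' v.support b v]
    congr 1
    have ha' : (if a ∈ v.support then v a else 0) = v a := by
      split_ifs with h'
      · rfl
      · exact (Finsupp.notMem_support_iff.mp h').symm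
    have hb' : (if b ∈ v.support then v b else 0) = v b := by
      split_ifs with h'
      · rfl
      · exact (Finsupp.notMem_support_iff.mp h').symm
    rw [ha', hb']
  rw [hφm] at hmap
  have hne : (Polynomial.X : Polynomial k) ^ (v a + v b) ≠ 0 :=
    pow_ne_zero _ Polynomial.X_ne_zero
  have := Polynomial.natDegree_le_of_dvd hmap hne
  simpa [Polynomial.natDegree_X_pow] using this

end P5Aux

/-- Let `u_1 = x_2x_4`, `u_2 = x_1x_3x_4`, `u_3 = x_1x_3x_5`,
`u_4 = x_2x_3x_5` be the minimal generators of `J(P_5)`.  If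
`U = u_1^α u_2^β u_3^γ u_4^δ` is an `s`-fold product which is not a minimal generator
of `J(P_5)^s`, then `β > 0` and `δ > 0`. -/
theorem P5_nonminimal_sFold (k : Type*) [Field k] (s α β γ δ : ℕ)
    (hsum : α + β + γ + δ = s) (U : MvPolynomial ℕ k)
    (hU : U = ((X 2 : MvPolynomial ℕ k) * X 4) ^ α * (X 1 * X 3 * X 4) ^ β *
      (X 1 * X 3 * X 5) ^ γ * (X 2 * X 3 * X 5) ^ δ)
    (hnm : U ∉ minGens ((pathCoverIdeal k 5) ^ s)) :
    0 < β ∧ 0 < δ := by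
  classical
  subst hsum
  by_contra hcon
  apply hnm
  have hβδ : β = 0 ∨ δ = 0 := by omega
  -- the exponent vector of `U`
  set e : ℕ →₀ ℕ := Finsupp.single 1 (β + γ) + Finsupp.single 2 (α + δ) +
    Finsupp.single 3 (β + γ + δ) + Finsupp.single 4 (α + β) + Finsupp.single 5 (γ + δ)
    with he
  have hUe : U = monomial e 1 := by
    rw [hU]
    simp only [mul_pow, X_pow_eq_monomial, monomial_mul, one_mul, mul_one]
    rw [MvPolynomial.monomial_eq_monomial_iff]
    left
    refine ⟨?_, rfl⟩
    ext j
    simp only [he, Finsupp.coe_add, Pi.add_apply, Finsupp.single_apply]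
    split_ifs <;> omega
  have he1 : e 1 = β + γ := by simp [he, Finsupp.single_apply]
  have he2 : e 2 = α + δ := by simp [he, Finsupp.single_apply]
  have he3 : e 3 = β + γ + δ := by simp [he, Finsupp.single_apply]
  have he4 : e 4 = α + β := by simp [he, Finsupp.single_apply]
  have he5 : e 5 = γ + δ := by simp [he, Finsupp.single_apply]
  have hJ : pathCoverIdeal k 5 =
      ⨅ i ∈ Finset.Icc 1 4, Ideal.span {(X i : MvPolynomial ℕ k), X (i + 1)} := rfl
  -- the four generators lie in the cover ideal
  have hg1 : ((X 2 : MvPolynomial ℕ k) * X 4) ∈ pathCoverIdeal k 5 := by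
    rw [hJ]
    simp only [Ideal.mem_iInf]
    intro i hi
    rw [Finset.mem_Icc] at hi
    obtain ⟨hi1, hi4⟩ := hi
    interval_cases i <;> rw [Ideal.mem_span_pair]
    · exact ⟨0, X 4, by ring⟩
    · exact ⟨X 4, 0, by ring⟩
    · exact ⟨0, X 2, by ring⟩
    · exact ⟨X 2, 0, by ring⟩
  have hg2 : ((X 1 : MvPolynomial ℕ k) * X 3 * X 4) ∈ pathCoverIdeal k 5 := by
    rw [hJ]
    simp only [Ideal.mem_iInf]
    intro i hi
    rw [Finset.mem_Icc] at hi
    obtain ⟨hi1, hi4⟩ := hi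
    interval_cases i <;> rw [Ideal.mem_span_pair]
    · exact ⟨X 3 * X 4, 0, by ring⟩
    · exact ⟨0, X 1 * X 4, by ring⟩
    · exact ⟨X 1 * X 4, 0, by ring⟩
    · exact ⟨X 1 * X 3, 0, by ring⟩
  have hg3 : ((X 1 : MvPolynomial ℕ k) * X 3 * X 5) ∈ pathCoverIdeal k 5 := by
    rw [hJ]
    simp only [Ideal.mem_iInf]
    intro i hi
    rw [Finset.mem_Icc] at hi
    obtain ⟨hi1, hi4⟩ := hi
    interval_cases i <;> rw [Ideal.mem_span_pair]
    · exact ⟨X 3 * X 5, 0, by ring⟩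
    · exact ⟨0, X 1 * X 5, by ring⟩
    · exact ⟨X 1 * X 5, 0, by ring⟩
    · exact ⟨0, X 1 * X 3, by ring⟩
  have hg4 : ((X 2 : MvPolynomial ℕ k) * X 3 * X 5) ∈ pathCoverIdeal k 5 := by
    rw [hJ]
    simp only [Ideal.mem_iInf]
    intro i hi
    rw [Finset.mem_Icc] at hi
    obtain ⟨hi1, hi4⟩ := hi
    interval_cases i <;> rw [Ideal.mem_span_pair]
    · exact ⟨0, X 3 * X 5, by ring⟩
    · exact ⟨X 3 * X 5, 0, by ring⟩
    · exact ⟨X 2 * X 5, 0, by ring⟩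
    · exact ⟨0, X 2 * X 3, by ring⟩
  have hUmem : U ∈ (pathCoverIdeal k 5) ^ (α + β + γ + δ) := by
    have hprod : ((X 2 : MvPolynomial ℕ k) * X 4) ^ α * (X 1 * X 3 * X 4) ^ β *
        (X 1 * X 3 * X 5) ^ γ * (X 2 * X 3 * X 5) ^ δ ∈
        (pathCoverIdeal k 5) ^ α * (pathCoverIdeal k 5) ^ β *
        (pathCoverIdeal k 5) ^ γ * (pathCoverIdeal k 5) ^ δ :=
      Ideal.mul_mem_mul (Ideal.mul_mem_mul (Ideal.mul_mem_mul
        (Ideal.pow_mem_pow hg1 α) (Ideal.pow_mem_pow hg2 β))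
        (Ideal.pow_mem_pow hg3 γ)) (Ideal.pow_mem_pow hg4 δ)
    rw [← pow_add, ← pow_add, ← pow_add] at hprod
    rw [hU]
    exact hprod
  refine ⟨⟨e, hUe⟩, hUmem, ?_⟩
  intro m' hm'mono hm'mem hdvd
  obtain ⟨v, rfl⟩ := hm'mono
  rw [hUe] at hdvd
  have hve : v ≤ e := by
    rcases (MvPolynomial.monomial_dvd_monomial.mp hdvd).1 with h | h
    · exact absurd h one_ne_zero
    · exact h
  have hvel := Finsupp.le_def.mp hve
  have hv1 : v 1 ≤ β + γ := he1 ▸ hvel 1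
  have hv2 : v 2 ≤ α + δ := he2 ▸ hvel 2
  have hv3 : v 3 ≤ β + γ + δ := he3 ▸ hvel 3
  have hv4 : v 4 ≤ α + β := he4 ▸ hvel 4
  have hv5 : v 5 ≤ γ + δ := he5 ▸ hvel 5
  -- edge inequalities
  have hedge : ∀ i, 1 ≤ i → i ≤ 4 →
      (monomial v (1 : k)) ∈
        (Ideal.span {(X i : MvPolynomial ℕ k), X (i + 1)}) ^ (α + β + γ + δ) := by
    intro i hi1 hi4
    refine Ideal.pow_right_mono ?_ _ hm'mem
    rw [hJ]
    exact iInf₂_le i (Finset.mem_Icc.mpr ⟨hi1, hi4⟩)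
  have h12 : α + β + γ + δ ≤ v 1 + v 2 :=
    P5Aux.edge_le (by norm_num) (hedge 1 (by norm_num) (by norm_num))
  have h23 : α + β + γ + δ ≤ v 2 + v 3 :=
    P5Aux.edge_le (by norm_num) (hedge 2 (by norm_num) (by norm_num))
  have h34 : α + β + γ + δ ≤ v 3 + v 4 :=
    P5Aux.edge_le (by norm_num) (hedge 3 (by norm_num) (by norm_num))
  have h45 : α + β + γ + δ ≤ v 4 + v 5 :=
    P5Aux.edge_le (by norm_num) (hedge 4 (by norm_num) (by norm_num))
  -- conclude that the exponent vectors agree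
  have hev : e ≤ v := by
    have hsupp : e.support ⊆ ({1, 2, 3, 4, 5} : Finset ℕ) := by
      intro i hi
      simp only [Finsupp.mem_support_iff] at hi
      by_contra hmem
      simp only [Finset.mem_insert, Finset.mem_singleton] at hmem
      push_neg at hmem
      obtain ⟨n1, n2, n3, n4, n5⟩ := hmem
      exact hi (by
        simp [he, Finsupp.single_apply, Ne.symm n1, Ne.symm n2, Ne.symm n3,
          Ne.symm n4, Ne.symm n5])
    rw [Finsupp.le_iff' e v hsupp]
    intro i hi
    fin_cases hi
    · rw [he1]; omega
    · rw [he2]; omega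
    · rw [he3]; omega
    · rw [he4]; omega
    · rw [he5]; omega
  rw [hUe, le_antisymm hve hev]
end

section
/- Let n ≥ 2, s ≥ 2, and let R(P_n) = u_1,…,u_r be the rooted list of minimal generators of J(P_n). If u_{i_1}⋯u_{i_s} is the maximal expression for some i_1 ≤ ⋯ ≤ i_s, then for all p, q ∈ {i_1,…,i_s} with p < q, the expression u_p u_q is the maximal expression (as a 2-fold product). -/
open MvPolynomial

/-- General form of Statement 9, for an arbitrary list of monomials. -/
theorem pairs_aux {k : Type*} [Field k] (L : List (MvPolynomial ℕ k))
    (s : ℕ) (hs : 2 ≤ s) (a : ℕ → ℕ) (M : MvPolynomial ℕ k)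
    (hmax : IsMaxExpr L s a M) :
    ∀ p q, p < q → 0 < a p → 0 < a q →
      IsMaxExpr L 2 (fun t => if t = p ∨ t = q then 1 else 0)
        (L.getD p 1 * L.getD q 1) := by
  intro p q hpq hap haq
  obtain ⟨⟨hz, hsum, hprod⟩, hmax2⟩ := hmax
  set len := L.length with hlen
  set u : ℕ → MvPolynomial ℕ k := fun i => L.getD i 1 with hu
  have hpqne : p ≠ q := Nat.ne_of_lt hpq
  have hplen : p < len := by
    by_contra h; push_neg at h; rw [hz p h] at hap; exact absurd hap (lt_irrefl 0)
  have hqlen : q < len := by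
    by_contra h; push_neg at h; rw [hz q h] at haq; exact absurd haq (lt_irrefl 0)
  set e : ℕ → ℕ := fun t => if t = p ∨ t = q then 1 else 0 with he
  have hele : ∀ i, e i ≤ a i := by
    intro i
    by_cases h : i = p ∨ i = q
    · rcases h with rfl | rfl <;> simp [he] <;> omega
    · simp [he, h]
  have hesplit : ∀ i, e i = (if i = p then 1 else 0) + (if i = q then 1 else 0) := by
    intro i
    by_cases h1 : i = p
    · by_cases h2 : i = q
      · exact absurd (h1.symm.trans h2) hpqne
      · simp [he, h1, h2, hpqne, Ne.symm hpqne]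
    · by_cases h2 : i = q <;> simp [he, h1, h2, hpqne, Ne.symm hpqne]
  have hezero : ∀ i, len ≤ i → e i = 0 := by
    intro i hi
    have : ¬ (i = p ∨ i = q) := by rintro (rfl | rfl) <;> omega
    simp [he, this]
  have hesum : (∑ i ∈ Finset.range len, e i) = 2 := by
    calc (∑ i ∈ Finset.range len, e i)
        = ∑ i ∈ Finset.range len,
            ((if i = p then 1 else 0) + (if i = q then 1 else 0)) :=
          Finset.sum_congr rfl (fun i _ => hesplit i)
      _ = 2 := by
          rw [Finset.sum_add_distrib,
            Finset.sum_ite_eq' (Finset.range len) p (fun _ => 1),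
            Finset.sum_ite_eq' (Finset.range len) q (fun _ => 1)]
          simp [Finset.mem_range.mpr hplen, Finset.mem_range.mpr hqlen]
  have heprodsplit : ∀ i, u i ^ e i =
      (if i = p then u i else 1) * (if i = q then u i else 1) := by
    intro i
    by_cases h1 : i = p
    · by_cases h2 : i = q
      · exact absurd (h1.symm.trans h2) hpqne
      · simp [he, h1, h2, hpqne, Ne.symm hpqne]
    · by_cases h2 : i = q <;> simp [he, h1, h2, hpqne, Ne.symm hpqne]
  have heprod : (∏ i ∈ Finset.range len, u i ^ e i) = u p * u q := by
    calc (∏ i ∈ Finset.range len, u i ^ e i)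
        = ∏ i ∈ Finset.range len,
            ((if i = p then u i else 1) * (if i = q then u i else 1)) :=
          Finset.prod_congr rfl (fun i _ => heprodsplit i)
      _ = u p * u q := by
          rw [Finset.prod_mul_distrib,
            Finset.prod_ite_eq' (Finset.range len) p u,
            Finset.prod_ite_eq' (Finset.range len) q u]
          simp [Finset.mem_range.mpr hplen, Finset.mem_range.mpr hqlen]
  have heexpr : IsExprOn L 2 e (u p * u q) := ⟨hezero, hesum, heprod.symm⟩
  refine ⟨heexpr, ?_⟩
  intro b hb hbe
  obtain ⟨hbz, hbsum, hbprod⟩ := hb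
  have hex : ∃ t, b t ≠ e t := by
    by_contra h
    push_neg at h
    exact hbe (funext h)
  set t := Nat.find hex with ht
  have htne : b t ≠ e t := Nat.find_spec hex
  have htmin : ∀ j, j < t → b j = e j := by
    intro j hj
    by_contra h
    exact absurd (Nat.find_le h) (not_le.mpr hj)
  rcases lt_or_gt_of_ne htne with hlt | hgt
  · exact ⟨t, fun j hj => (htmin j hj).symm, hlt⟩
  · -- e t < b t : contradiction with maximality of a
    exfalso
    set a' : ℕ → ℕ := fun i => a i - e i + b i with ha'
    have ha't : a t < a' t := by
      have := hele t; simp only [ha']; omega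
    have ha'z : ∀ i, len ≤ i → a' i = 0 := by
      intro i hi; simp only [ha', hz i hi, hbz i hi, hezero i hi]
    have hsub : (∑ i ∈ Finset.range len, (a i - e i)) + 2 = s := by
      have h1 : (∑ i ∈ Finset.range len, (a i - e i)) +
          (∑ i ∈ Finset.range len, e i) = ∑ i ∈ Finset.range len, a i := by
        rw [← Finset.sum_add_distrib]
        exact Finset.sum_congr rfl (fun i _ => Nat.sub_add_cancel (hele i))
      rw [hesum] at h1
      rw [h1, hsum]
    have ha'sum : (∑ i ∈ Finset.range len, a' i) = s := by
      have : (∑ i ∈ Finset.range len, a' i) =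
          (∑ i ∈ Finset.range len, (a i - e i)) + ∑ i ∈ Finset.range len, b i := by
        rw [← Finset.sum_add_distrib]
      rw [this, hbsum]
      exact hsub
    have ha'prod : M = ∏ i ∈ Finset.range len, u i ^ a' i := by
      have h1 : (∏ i ∈ Finset.range len, u i ^ a' i) =
          (∏ i ∈ Finset.range len, u i ^ (a i - e i)) *
            ∏ i ∈ Finset.range len, u i ^ b i := by
        rw [← Finset.prod_mul_distrib]
        exact Finset.prod_congr rfl (fun i _ => by rw [← pow_add])
      have h2 : (∏ i ∈ Finset.range len, u i ^ b i) =
          ∏ i ∈ Finset.range len, u i ^ e i := by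
        rw [heprod, ← hbprod]
      have h3 : (∏ i ∈ Finset.range len, u i ^ (a i - e i)) *
          (∏ i ∈ Finset.range len, u i ^ e i) =
          ∏ i ∈ Finset.range len, u i ^ a i := by
        rw [← Finset.prod_mul_distrib]
        refine Finset.prod_congr rfl (fun i _ => ?_)
        rw [← pow_add, Nat.sub_add_cancel (hele i)]
      rw [h1, h2, h3, ← hprod]
    have ha'ne : a' ≠ a := by
      intro h
      have := congrFun h t
      omega
    obtain ⟨t', h1, h2⟩ := hmax2 a' ⟨ha'z, ha'sum, ha'prod⟩ ha'ne
    have ha'eq : ∀ j, j < t → a' j = a j := by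
      intro j hj
      simp only [ha', htmin j hj]
      have := hele j; omega
    rcases lt_trichotomy t t' with h | h | h
    · have := h1 t h; omega
    · subst h; omega
    · have := ha'eq t' h; omega

/-- Let `n ≥ 2`, `s ≥ 2`, and let `R(P_n) = u_1, …, u_r`.  If an
`s`-fold product `M` with exponent vector `a` (relative to the rooted list) is the
maximal expression, then for all indices `p < q` occurring in the expression
(`a p > 0` and `a q > 0`), the 2-fold expression `u_p u_q` is maximal. -/
theorem pairs_of_maximal_expression_are_maximal (k : Type*) [Field k]
    (n s : ℕ) (hn : 2 ≤ n) (hs : 2 ≤ s)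
    (a : ℕ → ℕ) (M : MvPolynomial ℕ k)
    (hmax : IsMaxExpr (rootedList k n) s a M) :
    ∀ p q, p < q → 0 < a p → 0 < a q →
      IsMaxExpr (rootedList k n) 2 (fun t => if t = p ∨ t = q then 1 else 0)
        ((rootedList k n).getD p 1 * (rootedList k n).getD q 1) := by
  exact pairs_aux (rootedList k n) s hs a M hmax
end
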